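/- Let μ : R → K be a K-valued measure on a covering ring R on a set X. Then for every B ∈ R, sup{N_μ(x) : x ∈ B} = ‖B‖_μ, where the supremum over the empty set is taken to be 0. Equivalently, the indicator function χ_B satisfies sup_{x∈X} |χ_B(x)|·N_μ(x) = ‖B‖_μ. -/

import Mathlib

open scoped Classical

/-- A covering ring of subsets of `X`: it covers `X` and is closed under
intersections, unions and differences. -/
def IsCoveringRing {X : Type*} (R : Set (Set X)) : Prop :=
  (∀ x : X, ∃ A ∈ R, x ∈ A) ∧
    ∀ A ∈ R, ∀ B ∈ R, A ∩ B ∈ R ∧ A ∪ B ∈ R ∧ A \ B ∈ R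

/-- `R` is separating: distinct points can be separated by a member of `R`. -/
def Separating {X : Type*} (R : Set (Set X)) : Prop :=
  ∀ x y : X, x ≠ y → ∃ A ∈ R, x ∈ A ∧ y ∉ A

/-- A shrinking collection: the intersection of any two members contains a member. -/
def Shrinking {X : Type*} (𝒜 : Set (Set X)) : Prop :=
  ∀ A ∈ 𝒜, ∀ B ∈ 𝒜, ∃ C ∈ 𝒜, C ⊆ A ∩ B

/-- A `K`-valued measure on a covering ring `R`: additive, bounded and continuous. -/
structure IsKMeasure {X : Type*} {K : Type*} [NormedField K]
    (R : Set (Set X)) (μ : Set X → K) : Prop where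
  additive : ∀ A ∈ R, ∀ B ∈ R, Disjoint A B → μ (A ∪ B) = μ A + μ B
  bounded : ∀ A ∈ R, ∃ M : ℝ, ∀ B ∈ R, B ⊆ A → ‖μ B‖ ≤ M
  cont : ∀ 𝒜 ⊆ R, Shrinking 𝒜 → ⋂₀ 𝒜 = ∅ →
    ∀ ε : ℝ, 0 < ε → ∃ A₀ ∈ 𝒜, ∀ A ∈ 𝒜, A ⊆ A₀ → ‖μ A‖ < ε

/-- `‖A‖_μ = sup {|μ B| : B ∈ R, B ⊆ A}`. -/
noncomputable def setNorm {X K : Type*} [NormedField K]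
    (R : Set (Set X)) (μ : Set X → K) (A : Set X) : ℝ :=
  sSup {r : ℝ | ∃ B ∈ R, B ⊆ A ∧ r = ‖μ B‖}

/-- `N_μ(x) = inf {‖A‖_μ : A ∈ R, x ∈ A}`. -/
noncomputable def normFun {X K : Type*} [NormedField K]
    (R : Set (Set X)) (μ : Set X → K) (x : X) : ℝ :=
  sInf {r : ℝ | ∃ A ∈ R, x ∈ A ∧ r = setNorm R μ A}

/-- `‖f‖_μ = sup_{x ∈ X} |f x| ⬝ N_μ(x)`. -/
noncomputable def fNorm {X K : Type*} [NormedField K]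
    (R : Set (Set X)) (μ : Set X → K) (f : X → K) : ℝ :=
  sSup {r : ℝ | ∃ x : X, r = ‖f x‖ * normFun R μ x}

/-- A probability space: `R` is a covering algebra and `μ(X) = 1`. -/
def IsProbSpace {X K : Type*} [NormedField K] (R : Set (Set X)) (μ : Set X → K) : Prop :=
  IsCoveringRing R ∧ Set.univ ∈ R ∧ IsKMeasure R μ ∧ μ Set.univ = 1

/-- A measure algebra isomorphism `(R,μ) → (R',ν)`. -/
def IsMeasAlgIso {X Y K : Type*} [NormedField K] (R : Set (Set X)) (μ : Set X → K)
    (R' : Set (Set Y)) (ν : Set Y → K) (Φ : Set X → Set Y) : Prop :=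
  Set.BijOn Φ R R' ∧
    (∀ A ∈ R, ∀ B ∈ R, Φ (A ∪ B) = Φ A ∪ Φ B) ∧
    (∀ A ∈ R, Φ (Set.univ \ A) = Set.univ \ Φ A) ∧
    (∀ A ∈ R, ν (Φ A) = μ A)

/-- An invertible measure preserving transformation of `(X,R,μ)`. -/
def IsInvMPT {X K : Type*} [NormedField K] (R : Set (Set X)) (μ : Set X → K)
    (T : X → X) : Prop :=
  Function.Bijective T ∧
    (∀ A ∈ R, T '' A ∈ R) ∧ (∀ A ∈ R, T ⁻¹' A ∈ R) ∧
    (∀ A ∈ R, μ (T '' A) = μ A) ∧ (∀ A ∈ R, μ (T ⁻¹' A) = μ A)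

/-- A finite partition of `X` by pairwise disjoint nonempty members of `R`. -/
def IsFinPartition {X : Type*} (R : Set (Set X)) (α : Finset (Set X)) : Prop :=
  (∀ A ∈ α, A ∈ R) ∧ (∀ A ∈ α, A ≠ ∅) ∧
    (∀ A ∈ α, ∀ B ∈ α, A ≠ B → Disjoint A B) ∧
    ⋃₀ (α : Set (Set X)) = Set.univ

/-- The join `α ∨ β` of two partitions, discarding empty intersections. -/
noncomputable def pJoin {X : Type*} (α β : Finset (Set X)) : Finset (Set X) :=
  (Finset.image₂ (fun A B => A ∩ B) α β).filter (fun C => C ≠ ∅)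

/-- `M(α)`: the number of members of `α` of positive norm. -/
noncomputable def Mcard {X K : Type*} [NormedField K] (R : Set (Set X)) (μ : Set X → K)
    (α : Finset (Set X)) : ℕ :=
  (α.filter (fun A => 0 < setNorm R μ A)).card

/-- `H_μ(α) = (min {‖A‖_μ : A ∈ α, ‖A‖_μ > 0}) * log₂ M(α)` (and `0` if `M(α) = 0`,
since `sInf ∅ = 0` and `log₂ 0 = 0` in Mathlib). -/
noncomputable def Hent {X K : Type*} [NormedField K] (R : Set (Set X)) (μ : Set X → K)
    (α : Finset (Set X)) : ℝ :=
  sInf {r : ℝ | ∃ A ∈ α, 0 < setNorm R μ A ∧ r = setNorm R μ A} *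
    Real.logb 2 (Mcard R μ α)

/-- `joinSeq T α n = α ∨ T⁻¹α ∨ ⋯ ∨ T^{-n}α`. -/
noncomputable def joinSeq {X : Type*} (T : X → X) (α : Finset (Set X)) : ℕ → Finset (Set X)
  | 0 => α
  | n + 1 => pJoin (joinSeq T α n) (α.image (fun A => T^[n + 1] ⁻¹' A))

/-- `h_μ(T,α) = lim_{n→∞} H_μ(α ∨ T⁻¹α ∨ ⋯ ∨ T^{-(n-1)}α)/n`. -/
noncomputable def hMeasPart {X K : Type*} [NormedField K] (R : Set (Set X)) (μ : Set X → K)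
    (T : X → X) (α : Finset (Set X)) : ℝ :=
  Filter.limUnder Filter.atTop (fun n : ℕ => Hent R μ (joinSeq T α n) / (n + 1))

/-- `h_μ(T) = sup_α h_μ(T,α)` over finite partitions `α` of `X` relative to `R`. -/
noncomputable def hMeas {X K : Type*} [NormedField K] (R : Set (Set X)) (μ : Set X → K)
    (T : X → X) : ℝ :=
  sSup {r : ℝ | ∃ α : Finset (Set X), IsFinPartition R α ∧ r = hMeasPart R μ T α}

/-- The partition `α(𝒰)` associated to a finite cover `𝒰`: nonempty sets of the form
`A₁ ∩ ⋯ ∩ A_k` where each `Aᵢ` is `Uᵢ` or `X ∖ Uᵢ`. -/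
noncomputable def coverPart {X : Type*} (𝒰 : Finset (Set X)) : Finset (Set X) :=
  ((𝒰.powerset).image fun S => (⋂ U ∈ S, U) ∩ ⋂ U ∈ 𝒰 \ S, (Set.univ \ U)).filter
    (fun C => C ≠ ∅)

/-- The join `𝒰 ∨ 𝒲` of two covers. -/
noncomputable def cJoin {X : Type*} (𝒰 𝒲 : Finset (Set X)) : Finset (Set X) :=
  Finset.image₂ (fun U W => U ∩ W) 𝒰 𝒲

/-- `N(𝒰)`: the least cardinality of a subcover of `𝒰`. -/
noncomputable def coverN {X : Type*} (𝒰 : Finset (Set X)) : ℕ :=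
  sInf {n : ℕ | ∃ 𝒱 : Finset (Set X), 𝒱 ⊆ 𝒰 ∧ ⋃₀ (𝒱 : Set (Set X)) = Set.univ ∧ 𝒱.card = n}

/-- `H_top(𝒰) = log₂ N(𝒰)`. -/
noncomputable def Htop {X : Type*} (𝒰 : Finset (Set X)) : ℝ :=
  Real.logb 2 (coverN 𝒰)

/-- `cJoinSeq T 𝒰 n = 𝒰 ∨ T⁻¹𝒰 ∨ ⋯ ∨ T^{-n}𝒰`. -/
noncomputable def cJoinSeq {X : Type*} (T : X → X) (𝒰 : Finset (Set X)) : ℕ → Finset (Set X)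
  | 0 => 𝒰
  | n + 1 => cJoin (cJoinSeq T 𝒰 n) (𝒰.image (fun U => T^[n + 1] ⁻¹' U))

/-- `h_top(T,𝒰) = lim_{n→∞} H_top(𝒰 ∨ T⁻¹𝒰 ∨ ⋯ ∨ T^{-(n-1)}𝒰)/n`. -/
noncomputable def hTopCov {X : Type*} (T : X → X) (𝒰 : Finset (Set X)) : ℝ :=
  Filter.limUnder Filter.atTop (fun n : ℕ => Htop (cJoinSeq T 𝒰 n) / (n + 1))

/-- `h_top(T) = sup_𝒰 h_top(T,𝒰)` over finite open covers `𝒰` of `X` for the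
topology `t`. -/
noncomputable def hTop {X : Type*} (t : TopologicalSpace X) (T : X → X) : ℝ :=
  sSup {r : ℝ | ∃ 𝒰 : Finset (Set X), (∀ U ∈ 𝒰, t.IsOpen U) ∧
    ⋃₀ (𝒰 : Set (Set X)) = Set.univ ∧ r = hTopCov T 𝒰}

/-!
The inequality `sup_{x ∈ B} N_μ(x) ≤ ‖B‖_μ` is immediate. Conversely, suppose `N_μ ≤ c` on `B`
and let `C ⊆ B` be in `R`. Cover each point of `C` by a member of `R` of norm `< c + ε`. The sets
`C ∖ (U₁ ∪ ⋯ ∪ Uₙ)` form a shrinking family with empty intersection, so by continuity one of them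
has measure `< ε`; the rest of `C` lies in finitely many of the `Uᵢ`, and the ultrametric
inequality bounds its measure by `c + ε`. Hence `|μ(C)| ≤ c + ε`.
-/

namespace IsCoveringRing

variable {X : Type*} {R : Set (Set X)} {A B : Set X}

lemma inter_mem (hR : IsCoveringRing R) (hA : A ∈ R) (hB : B ∈ R) : A ∩ B ∈ R :=
  (hR.2 A hA B hB).1

lemma diff_mem (hR : IsCoveringRing R) (hA : A ∈ R) (hB : B ∈ R) : A \ B ∈ R :=
  (hR.2 A hA B hB).2.2

lemma empty_mem (hR : IsCoveringRing R) (hA : A ∈ R) : ∅ ∈ R := by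
  simpa using hR.diff_mem hA hA

lemma diff_biUnion_mem {ι : Type*} (hR : IsCoveringRing R) (hA : A ∈ R) {U : ι → Set X}
    (hU : ∀ i, U i ∈ R) (s : Finset ι) : A \ ⋃ i ∈ s, U i ∈ R := by
  induction s using Finset.induction_on with
  | empty => simpa using hA
  | insert i s _ ih =>
    rw [Finset.set_biUnion_insert, Set.union_comm, ← Set.sdiff_sdiff]
    exact hR.diff_mem ih (hU i)

end IsCoveringRing

section NormBounds

variable {X K : Type*} [NormedField K] {R : Set (Set X)} {μ : Set X → K}

lemma setNorm_nonneg (A : Set X) : 0 ≤ setNorm R μ A :=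
  Real.sSup_nonneg (by rintro r ⟨B, -, -, rfl⟩; exact norm_nonneg _)

lemma normFun_le_setNorm {A : Set X} {x : X} (hA : A ∈ R) (hx : x ∈ A) :
    normFun R μ x ≤ setNorm R μ A :=
  csInf_le ⟨0, by rintro r ⟨C, -, -, rfl⟩; exact setNorm_nonneg C⟩ ⟨A, hA, hx, rfl⟩

lemma normFun_nonneg (x : X) : 0 ≤ normFun R μ x :=
  Real.sInf_nonneg (by rintro r ⟨A, -, -, rfl⟩; exact setNorm_nonneg A)

lemma exists_mem_setNorm_lt_of_normFun_lt (hR : IsCoveringRing R) {x : X} {t : ℝ}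
    (h : normFun R μ x < t) : ∃ A ∈ R, x ∈ A ∧ setNorm R μ A < t := by
  obtain ⟨A, hA, hxA⟩ := hR.1 x
  obtain ⟨_, ⟨B, hB, hxB, rfl⟩, hBt⟩ :=
    exists_lt_of_csInf_lt (s := {r | ∃ A ∈ R, x ∈ A ∧ r = setNorm R μ A})
      ⟨setNorm R μ A, A, hA, hxA, rfl⟩ h
  exact ⟨B, hB, hxB, hBt⟩

end NormBounds

namespace IsKMeasure

variable {X K : Type*} [NormedField K] {R : Set (Set X)} {μ : Set X → K}

lemma map_empty (hμ : IsKMeasure R μ) (h : ∅ ∈ R) : μ ∅ = 0 := by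
  simpa using hμ.additive ∅ h ∅ h disjoint_bot_left

lemma norm_le_setNorm (hμ : IsKMeasure R μ) {A B : Set X} (hA : A ∈ R) (hB : B ∈ R)
    (hBA : B ⊆ A) : ‖μ B‖ ≤ setNorm R μ A := by
  obtain ⟨M, hM⟩ := hμ.bounded A hA
  exact le_csSup ⟨M, by rintro r ⟨C, hC, hCA, rfl⟩; exact hM C hC hCA⟩ ⟨B, hB, hBA, rfl⟩

lemma map_inter_add_map_diff (hR : IsCoveringRing R) (hμ : IsKMeasure R μ) {A B : Set X}
    (hA : A ∈ R) (hB : B ∈ R) : μ (A ∩ B) + μ (A \ B) = μ A := by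
  rw [← hμ.additive _ (hR.inter_mem hA hB) _ (hR.diff_mem hA hB) Set.disjoint_sdiff_inter.symm,
    Set.inter_union_sdiff]

lemma norm_le_max_inter_diff (hna : IsNonarchimedean (norm : K → ℝ)) (hR : IsCoveringRing R)
    (hμ : IsKMeasure R μ) {A B : Set X} (hA : A ∈ R) (hB : B ∈ R) :
    ‖μ A‖ ≤ max ‖μ (A ∩ B)‖ ‖μ (A \ B)‖ :=
  hμ.map_inter_add_map_diff hR hA hB ▸ hna _ _

lemma norm_le_of_subset_biUnion (hna : IsNonarchimedean (norm : K → ℝ))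
    (hR : IsCoveringRing R) (hμ : IsKMeasure R μ) {ι : Type*} {U : ι → Set X}
    (hU : ∀ i, U i ∈ R) {c : ℝ} (hc : 0 ≤ c) (hUc : ∀ i, setNorm R μ (U i) ≤ c)
    (s : Finset ι) {T : Set X} (hT : T ∈ R) (hTs : T ⊆ ⋃ i ∈ s, U i) : ‖μ T‖ ≤ c := by
  induction s using Finset.induction_on generalizing T with
  | empty =>
    have hT_empty : T = ∅ := Set.subset_empty_iff.mp (by simpa using hTs)
    rw [hT_empty, hμ.map_empty (hR.empty_mem hT), norm_zero]
    exact hc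
  | insert i s _ ih =>
    refine (hμ.norm_le_max_inter_diff hna hR hT (hU i)).trans (max_le ?_ ?_)
    · exact (hμ.norm_le_setNorm (hU i) (hR.inter_mem hT (hU i)) Set.inter_subset_right).trans
        (hUc i)
    · refine ih (hR.diff_mem hT (hU i)) fun x hx => ?_
      obtain ⟨j, hj, hxj⟩ := Set.mem_iUnion₂.mp (hTs hx.1)
      rcases Finset.mem_insert.mp hj with rfl | hj
      · exact absurd hxj hx.2
      · exact Set.mem_biUnion hj hxj

lemma exists_norm_diff_biUnion_lt (hR : IsCoveringRing R) (hμ : IsKMeasure R μ) {ι : Type*}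
    {A : Set X} (hA : A ∈ R) {U : ι → Set X} (hU : ∀ i, U i ∈ R) (hAU : A ⊆ ⋃ i, U i)
    {ε : ℝ} (hε : 0 < ε) : ∃ s : Finset ι, ‖μ (A \ ⋃ i ∈ s, U i)‖ < ε := by
  let 𝒜 := Set.range fun s : Finset ι => A \ ⋃ i ∈ s, U i
  have h𝒜R : 𝒜 ⊆ R := by
    rintro _ ⟨s, rfl⟩
    exact hR.diff_biUnion_mem hA hU s
  have h𝒜 : Shrinking 𝒜 := by
    rintro _ ⟨s, rfl⟩ _ ⟨t, rfl⟩
    refine ⟨_, ⟨s ∪ t, rfl⟩, ?_⟩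
    simp only [Finset.set_biUnion_union, ← Set.sdiff_inter_sdiff, subset_rfl]
  have h𝒜_empty : ⋂₀ 𝒜 = ∅ := by
    refine Set.eq_empty_iff_forall_notMem.mpr fun x hx => ?_
    rw [Set.mem_sInter] at hx
    have hxA : x ∈ A := by simpa using hx _ ⟨∅, rfl⟩
    obtain ⟨i, hxi⟩ := Set.mem_iUnion.mp (hAU hxA)
    exact (hx _ ⟨{i}, rfl⟩).2 (by simpa using hxi)
  obtain ⟨_, ⟨s, rfl⟩, hs⟩ := hμ.cont 𝒜 h𝒜R h𝒜 h𝒜_empty ε hε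
  exact ⟨s, hs _ ⟨s, rfl⟩ subset_rfl⟩

lemma norm_le_of_forall_normFun_le (hna : IsNonarchimedean (norm : K → ℝ))
    (hR : IsCoveringRing R) (hμ : IsKMeasure R μ) {A : Set X} (hA : A ∈ R) {c : ℝ}
    (hc : 0 ≤ c) (hAc : ∀ x ∈ A, normFun R μ x ≤ c) : ‖μ A‖ ≤ c := by
  refine le_of_forall_pos_le_add fun ε hε => ?_
  have hU : ∀ x : A, ∃ U ∈ R, (x : X) ∈ U ∧ setNorm R μ U < c + ε := fun x =>
    exists_mem_setNorm_lt_of_normFun_lt hR ((hAc x x.2).trans_lt (lt_add_of_pos_right c hε))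
  choose U hUR hxU hUc using hU
  have hAU : A ⊆ ⋃ x, U x := fun x hx => Set.mem_iUnion.mpr ⟨⟨x, hx⟩, hxU _⟩
  obtain ⟨s, hs⟩ := hμ.exists_norm_diff_biUnion_lt hR hA hUR hAU hε
  set V := ⋃ i ∈ s, U i
  have hD : A \ V ∈ R := hR.diff_biUnion_mem hA hUR s
  calc ‖μ A‖ ≤ max ‖μ (A ∩ (A \ V))‖ ‖μ (A \ (A \ V))‖ :=
        hμ.norm_le_max_inter_diff hna hR hA hD
    _ ≤ c + ε := by
      rw [Set.inter_eq_right.mpr Set.sdiff_subset]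
      refine max_le (hs.le.trans (le_add_of_nonneg_left hc)) ?_
      exact hμ.norm_le_of_subset_biUnion hna hR hUR (by positivity) (fun i => (hUc i).le) s
        (hR.diff_mem hA hD) (by rw [Set.sdiff_sdiff_right_self]; exact Set.inter_subset_right)

lemma setNorm_le_of_forall_normFun_le (hna : IsNonarchimedean (norm : K → ℝ))
    (hR : IsCoveringRing R) (hμ : IsKMeasure R μ) {A : Set X} {c : ℝ} (hc : 0 ≤ c)
    (hAc : ∀ x ∈ A, normFun R μ x ≤ c) : setNorm R μ A ≤ c :=
  Real.sSup_le (by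
    rintro _ ⟨B, hB, hBA, rfl⟩
    exact hμ.norm_le_of_forall_normFun_le hna hR hB hc fun x hx => hAc x (hBA hx)) hc

end IsKMeasure

theorem stmt2_general {X K : Type*} [NontriviallyNormedField K]
    (hna : IsNonarchimedean (norm : K → ℝ))
    (R : Set (Set X)) (hR : IsCoveringRing R) (μ : Set X → K) (hμ : IsKMeasure R μ) :
    ∀ B ∈ R, sSup {r : ℝ | ∃ x ∈ B, r = normFun R μ x} = setNorm R μ B := by
  intro B hB
  set S := {r : ℝ | ∃ x ∈ B, r = normFun R μ x}
  have hS : ∀ r ∈ S, r ≤ setNorm R μ B := by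
    rintro _ ⟨x, hx, rfl⟩
    exact normFun_le_setNorm hB hx
  have hS_nonneg : 0 ≤ sSup S :=
    Real.sSup_nonneg (by rintro _ ⟨x, -, rfl⟩; exact normFun_nonneg x)
  refine le_antisymm (Real.sSup_le hS (setNorm_nonneg B)) ?_
  exact hμ.setNorm_le_of_forall_normFun_le hna hR hS_nonneg fun x hx =>
    le_csSup ⟨_, hS⟩ ⟨x, hx, rfl⟩

/-- For every `B ∈ R`, `sup {N_μ(x) : x ∈ B} = ‖B‖_μ` (the supremum over
the empty set being `0`, which is `sSup ∅` in `ℝ`); equivalently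
`‖χ_B‖_μ = ‖B‖_μ`. -/
theorem stmt2 {X K : Type*} [NontriviallyNormedField K] [CompleteSpace K]
    (hna : IsNonarchimedean (norm : K → ℝ))
    (R : Set (Set X)) (hR : IsCoveringRing R) (μ : Set X → K) (hμ : IsKMeasure R μ) :
    ∀ B ∈ R, sSup {r : ℝ | ∃ x ∈ B, r = normFun R μ x} = setNorm R μ B :=
  stmt2_general hna R hR μ hμ
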